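/- Let M ≥ 1 be an integer, let λ* > 1 satisfy T_M(λ*) = 3, let x_j = cos((2j+1)π/(2M)) and ω_j = (λ*+1)/(2(λ*-x_j)) for j = 0, …, M-1 be the SRJ relaxation factors. Let B ∈ ℝ^{n×n} be a symmetric matrix all of whose eigenvalues lie in the half-open interval [-1, 1). Then every eigenvalue of the SRJ iteration matrix B_SRJ = ∏_{j=0}^{M-1} [(1-ω_j)I + ω_j B] has absolute value strictly less than 1; i.e. the spectral radius of B_SRJ is strictly less than 1, so one SRJ cycle is a convergent iteration whenever the underlying Jacobi-type iteration matrix B has spectrum in [-1,1). -/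

import Mathlib

/-!
On an eigenvector of `B` with eigenvalue `ν`, the `j`-th SRJ factor acts as the scalar
`(1 - ω_j) + ω_j ν = (f ν - x_j) / (λ* - x_j)`, where `f ν = ((λ* + 1) ν + (λ* - 1)) / 2`.
Since the `x_j` are the roots of `T_M`, the whole product is `T_M (f ν) / T_M λ*`.
The affine map `f` sends `[-1, 1)` onto `[-1, λ*)`, and there `|T_M| < T_M λ*`: on `[-1, 1]`
because `|T_M| ≤ 1 < T_M λ*`, and on `(1, λ*)` because every factor `t - x_j` of the root
product is positive and increasing. Symmetric `B` has a continuous functional calculus, so the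
spectrum of `B_SRJ = p(B)` is the image of the spectrum of `B` under the scalar polynomial `p`.
-/

open Polynomial Real

namespace Polynomial.Chebyshev

theorem eval_T_real_eq_prod (M : ℕ) (t : ℝ) :
    (T ℝ M).eval t =
      2 ^ (M - 1) * ∏ k ∈ Finset.range M, (t - cos ((2 * k + 1) * π / (2 * M))) := by
  have hroots : (T ℝ M).roots =
      (Multiset.range M).map fun k : ℕ => cos ((2 * k + 1) * π / (2 * M)) := by
    rw [roots_T_real, Finset.image_val]
    exact Multiset.dedup_eq_self.mpr (roots_T_real_nodup M)
  have hcard : (T ℝ M).roots.card = (T ℝ M).natDegree := by simp [hroots]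
  conv_lhs => rw [← C_leadingCoeff_mul_prod_multiset_X_sub_C hcard]
  simp [eval_multiset_prod, hroots, Finset.prod_eq_multiset_prod]

theorem abs_eval_T_real_lt_eval {M : ℕ} (hM : M ≠ 0) {t s : ℝ} (ht : -1 ≤ t) (hts : t < s)
    (hs : 1 < s) : |(T ℝ M).eval t| < (T ℝ M).eval s := by
  rcases le_or_gt t 1 with ht1 | ht1
  · exact (abs_eval_T_real_le_one M (abs_le.mpr ⟨ht, ht1⟩)).trans_lt
      (one_lt_eval_T_real (by exact_mod_cast hM) hs)
  · have hroot_lt : ∀ k ∈ Finset.range M, cos ((2 * k + 1) * π / (2 * M)) < t :=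
      fun k _ => (cos_le_one _).trans_lt ht1
    have hprod : ∏ k ∈ Finset.range M, (t - cos ((2 * k + 1) * π / (2 * M)))
        < ∏ k ∈ Finset.range M, (s - cos ((2 * k + 1) * π / (2 * M))) :=
      Finset.prod_lt_prod_of_nonempty (fun k hk => sub_pos.mpr (hroot_lt k hk))
        (fun k _ => by linarith) (Finset.nonempty_range_iff.mpr hM)
    have hpos : 0 < ∏ k ∈ Finset.range M, (t - cos ((2 * k + 1) * π / (2 * M))) :=
      Finset.prod_pos fun k hk => sub_pos.mpr (hroot_lt k hk)
    rw [eval_T_real_eq_prod, eval_T_real_eq_prod, abs_of_pos (by positivity)]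
    gcongr

end Polynomial.Chebyshev

noncomputable def srjPolynomial {R : Type*} [CommRing R] {M : ℕ} (ω : Fin M → R) : R[X] :=
  ∏ j, (C (1 - ω j) + C (ω j) * X)

theorem aeval_srjPolynomial {R A : Type*} [CommRing R] [Ring A] [Algebra R A] {M : ℕ}
    (ω : Fin M → R) (a : A) :
    aeval a (srjPolynomial ω) = (List.ofFn fun j => (1 - ω j) • (1 : A) + ω j • a).prod := by
  rw [srjPolynomial, ← List.prod_ofFn, map_list_prod, List.map_ofFn]
  refine congrArg (List.prod ∘ List.ofFn) (funext fun j => ?_)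
  simp [Algebra.algebraMap_eq_smul_one, sub_smul]

theorem srj_factor_eq {lam x ω : ℝ} (hx : x < lam) (hω : ω = (lam + 1) / (2 * (lam - x)))
    (ν : ℝ) :
    (1 - ω) + ω * ν = (((lam + 1) * ν + (lam - 1)) / 2 - x) / (lam - x) := by
  have : lam - x ≠ 0 := (sub_pos.mpr hx).ne'
  rw [hω]
  field_simp
  ring

theorem eval_srjPolynomial {M : ℕ} {lam : ℝ} (hlam : 1 < lam) {x ω : Fin M → ℝ}
    (hx : ∀ j : Fin M, x j = cos ((2 * (j : ℕ) + 1) * π / (2 * M)))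
    (hω : ∀ j, ω j = (lam + 1) / (2 * (lam - x j))) (ν : ℝ) :
    (srjPolynomial ω).eval ν =
      (Chebyshev.T ℝ M).eval (((lam + 1) * ν + (lam - 1)) / 2) /
        (Chebyshev.T ℝ M).eval lam := by
  have hx_lt : ∀ j, x j < lam := fun j => (hx j ▸ cos_le_one _).trans_lt hlam
  have hprod (t : ℝ) : (Chebyshev.T ℝ M).eval t = 2 ^ (M - 1) * ∏ j, (t - x j) := by
    rw [Chebyshev.eval_T_real_eq_prod, ← Fin.prod_univ_eq_prod_range]
    simp only [hx]
  simp only [srjPolynomial, eval_prod, eval_add, eval_mul, eval_C, eval_X,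
    fun j => srj_factor_eq (hx_lt j) (hω j) ν, Finset.prod_div_distrib, hprod]
  rw [mul_div_mul_left _ _ (by positivity)]

theorem abs_eval_srjPolynomial_lt_one {M : ℕ} (hM : M ≠ 0) {lam : ℝ} (hlam : 1 < lam)
    {x ω : Fin M → ℝ}
    (hx : ∀ j : Fin M, x j = cos ((2 * (j : ℕ) + 1) * π / (2 * M)))
    (hω : ∀ j, ω j = (lam + 1) / (2 * (lam - x j))) {ν : ℝ} (hν : ν ∈ Set.Ico (-1) 1) :
    |(srjPolynomial ω).eval ν| < 1 := by
  obtain ⟨hν₁, hν₂⟩ := hν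
  have hT := Chebyshev.abs_eval_T_real_lt_eval hM (t := ((lam + 1) * ν + (lam - 1)) / 2)
    (by nlinarith) (by nlinarith) hlam
  have hT_pos : 0 < (Chebyshev.T ℝ M).eval lam := (abs_nonneg _).trans_lt hT
  rwa [eval_srjPolynomial hlam hx hω, abs_div, abs_of_pos hT_pos, div_lt_one hT_pos]

theorem stmt16_general {n : ℕ} (M : ℕ) (hM : 1 ≤ M) (lamstar : ℝ) (hlam : 1 < lamstar)
    (x ω : Fin M → ℝ)
    (hx : ∀ j : Fin M, x j = Real.cos ((2 * (j : ℕ) + 1) * Real.pi / (2 * M)))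
    (hω : ∀ j, ω j = (lamstar + 1) / (2 * (lamstar - x j)))
    (B : Matrix (Fin n) (Fin n) ℝ) (hB : B.IsSymm)
    (hspec : ∀ μ ∈ spectrum ℝ B, μ ∈ Set.Ico (-1 : ℝ) 1)
    (BSRJ : Matrix (Fin n) (Fin n) ℝ)
    (hBSRJ : BSRJ = (List.ofFn fun j : Fin M =>
        (1 - ω j) • (1 : Matrix (Fin n) (Fin n) ℝ) + ω j • B).prod) :
    ∀ μ ∈ spectrum ℝ BSRJ, |μ| < 1 := by
  have hB_selfAdjoint : IsSelfAdjoint B := Matrix.isHermitian_iff_isSymm.mpr hB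
  intro μ hμ
  rw [hBSRJ, ← aeval_srjPolynomial, ← cfc_polynomial (srjPolynomial ω) B,
    cfc_map_spectrum (eval · (srjPolynomial ω)) B] at hμ
  obtain ⟨ν, hν, rfl⟩ := hμ
  exact abs_eval_srjPolynomial_lt_one (Nat.one_le_iff_ne_zero.mp hM) hlam hx hω (hspec ν hν)

/-- For a symmetric real matrix `B` with spectrum in `[-1, 1)`, every eigenvalue of the
SRJ iteration matrix `B_SRJ = ∏ j [(1-ω_j)I + ω_j B]` (with the Chebyshev-derived SRJ
relaxation factors) has absolute value strictly less than 1. -/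
theorem stmt16 {n : ℕ} (M : ℕ) (hM : 1 ≤ M) (lamstar : ℝ) (hlam : 1 < lamstar)
    (hT : (Polynomial.Chebyshev.T ℝ (M : ℤ)).eval lamstar = 3)
    (x ω : Fin M → ℝ)
    (hx : ∀ j : Fin M, x j = Real.cos ((2 * (j : ℕ) + 1) * Real.pi / (2 * M)))
    (hω : ∀ j, ω j = (lamstar + 1) / (2 * (lamstar - x j)))
    (B : Matrix (Fin n) (Fin n) ℝ) (hB : B.IsSymm)
    (hspec : ∀ μ ∈ spectrum ℝ B, μ ∈ Set.Ico (-1 : ℝ) 1)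
    (BSRJ : Matrix (Fin n) (Fin n) ℝ)
    (hBSRJ : BSRJ = (List.ofFn fun j : Fin M =>
        (1 - ω j) • (1 : Matrix (Fin n) (Fin n) ℝ) + ω j • B).prod) :
    ∀ μ ∈ spectrum ℝ BSRJ, |μ| < 1 :=
  stmt16_general M hM lamstar hlam x ω hx hω B hB hspec BSRJ hBSRJ
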